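/- For a BZ triangle Q, the set {Q′ ∈ BZ₃ : ∂(Q′) = ∂(Q)} has exactly one element if and only if it contains a BZ triangle having some corner entry equal to 0 and some hexagon entry equal to 0. -/

import Mathlib

/-!
On points satisfying the hexagon relations, the fibres of `∂` are the lines
`Q + t • (1,1,1,-1,-1,-1,-1,-1,-1)`. Moving along such a line raises the corner entries and lowers
the hexagon entries by `t`, so the BZ triangles in the fibre of a BZ triangle `Q` are those with
`-min (corner entries of Q) ≤ t ≤ min (hexagon entries of Q)`. This interval is a single point
exactly when both minima vanish.
-/

/-- The hexagon relations on a point of `ℤ⁹` with coordinates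
`(a₁,b₁,c₁,a₂,a₃,b₂,b₃,c₂,c₃)` (indices `0,…,8`). -/
def hex (x : Fin 9 → ℤ) : Prop :=
  x 3 + x 4 = x 6 + x 7 ∧ x 5 + x 6 = x 8 + x 3 ∧ x 7 + x 8 = x 4 + x 5

/-- A BZ triangle: a point of `ℕ⁹` (all entries nonnegative) satisfying the
hexagon relations. -/
def isBZ (x : Fin 9 → ℤ) : Prop := (∀ i, 0 ≤ x i) ∧ hex x

/-- The boundary map `∂ : ℤ⁹ → (ℤ²)³`. -/
def bd (x : Fin 9 → ℤ) : Fin 3 → ℤ × ℤ :=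
  ![(x 0 + x 3, x 4 + x 1), (x 1 + x 5, x 6 + x 2), (x 2 + x 7, x 8 + x 0)]

def fiberShift (Q : Fin 9 → ℤ) (t : ℤ) : Fin 9 → ℤ :=
  ![Q 0 + t, Q 1 + t, Q 2 + t, Q 3 - t, Q 4 - t, Q 5 - t, Q 6 - t, Q 7 - t, Q 8 - t]

theorem bd_eq_iff {Q Q' : Fin 9 → ℤ} :
    bd Q' = bd Q ↔ Q' 0 + Q' 3 = Q 0 + Q 3 ∧ Q' 4 + Q' 1 = Q 4 + Q 1 ∧
      Q' 1 + Q' 5 = Q 1 + Q 5 ∧ Q' 6 + Q' 2 = Q 6 + Q 2 ∧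
      Q' 2 + Q' 7 = Q 2 + Q 7 ∧ Q' 8 + Q' 0 = Q 8 + Q 0 := by
  simp [bd, funext_iff, Fin.forall_fin_succ, and_assoc]

theorem hex_fiberShift {Q : Fin 9 → ℤ} (h : hex Q) (t : ℤ) : hex (fiberShift Q t) := by
  simp only [hex, fiberShift, Matrix.cons_val] at *
  omega

theorem bd_fiberShift (Q : Fin 9 → ℤ) (t : ℤ) : bd (fiberShift Q t) = bd Q := by
  rw [bd_eq_iff]
  simp [fiberShift]

theorem fiberShift_eq_self_iff {Q : Fin 9 → ℤ} {t : ℤ} : fiberShift Q t = Q ↔ t = 0 := by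
  refine ⟨fun h => by simpa [fiberShift] using congrFun h 0, ?_⟩
  rintro rfl
  funext i
  fin_cases i <;> simp [fiberShift]

theorem eq_fiberShift_of_bd_eq {Q Q' : Fin 9 → ℤ} (h : hex Q) (h' : hex Q')
    (hb : bd Q' = bd Q) : Q' = fiberShift Q (Q' 0 - Q 0) := by
  rw [bd_eq_iff] at hb
  obtain ⟨h₁, h₂, h₃⟩ := h
  obtain ⟨h₁', h₂', h₃'⟩ := h'
  funext i
  fin_cases i <;> simp [fiberShift] <;> omega

theorem fiberShift_one_nonneg {Q : Fin 9 → ℤ} (hQ : ∀ i, 0 ≤ Q i)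
    (hh : ¬(Q 3 = 0 ∨ Q 4 = 0 ∨ Q 5 = 0 ∨ Q 6 = 0 ∨ Q 7 = 0 ∨ Q 8 = 0)) :
    ∀ i, 0 ≤ fiberShift Q 1 i := by
  intro i
  have := hQ i
  fin_cases i <;> simp [fiberShift] at * <;> omega

theorem fiberShift_neg_one_nonneg {Q : Fin 9 → ℤ} (hQ : ∀ i, 0 ≤ Q i)
    (hc : ¬(Q 0 = 0 ∨ Q 1 = 0 ∨ Q 2 = 0)) :
    ∀ i, 0 ≤ fiberShift Q (-1) i := by
  intro i
  have := hQ i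
  fin_cases i <;> simp [fiberShift] at * <;> omega

theorem eq_zero_of_fiberShift_nonneg {Q : Fin 9 → ℤ} {t : ℤ}
    (ht : ∀ i, 0 ≤ fiberShift Q t i) (hc : Q 0 = 0 ∨ Q 1 = 0 ∨ Q 2 = 0)
    (hh : Q 3 = 0 ∨ Q 4 = 0 ∨ Q 5 = 0 ∨ Q 6 = 0 ∨ Q 7 = 0 ∨ Q 8 = 0) : t = 0 := by
  simp [Fin.forall_fin_succ, fiberShift] at ht
  omega

theorem stmt_6 (Q : Fin 9 → ℤ) (hQ : isBZ Q) :
    (∃! Q' : Fin 9 → ℤ, isBZ Q' ∧ bd Q' = bd Q) ↔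
      (∃ Q' : Fin 9 → ℤ, isBZ Q' ∧ bd Q' = bd Q ∧
        (Q' 0 = 0 ∨ Q' 1 = 0 ∨ Q' 2 = 0) ∧
        (Q' 3 = 0 ∨ Q' 4 = 0 ∨ Q' 5 = 0 ∨ Q' 6 = 0 ∨ Q' 7 = 0 ∨ Q' 8 = 0)) := by
  constructor
  · intro huniq
    have mem_fiber (t : ℤ) (ht : ∀ i, 0 ≤ fiberShift Q t i) :
        isBZ (fiberShift Q t) ∧ bd (fiberShift Q t) = bd Q :=
      ⟨⟨ht, hex_fiberShift hQ.2 t⟩, bd_fiberShift Q t⟩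
    refine ⟨Q, hQ, rfl, ?_, ?_⟩ <;> by_contra h
    · have := huniq.unique (mem_fiber _ (fiberShift_neg_one_nonneg hQ.1 h)) ⟨hQ, rfl⟩
      simp [fiberShift_eq_self_iff] at this
    · have := huniq.unique (mem_fiber _ (fiberShift_one_nonneg hQ.1 h)) ⟨hQ, rfl⟩
      simp [fiberShift_eq_self_iff] at this
  · rintro ⟨Q', hQ', hb', hc, hh⟩
    refine ⟨Q', ⟨hQ', hb'⟩, fun Y ⟨hY, hbY⟩ => ?_⟩
    have hY_eq := eq_fiberShift_of_bd_eq hQ'.2 hY.2 (hbY.trans hb'.symm)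
    rw [hY_eq] at hY ⊢
    exact fiberShift_eq_self_iff.2 (eq_zero_of_fiberShift_nonneg hY.1 hc hh)
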